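/- Let (S_n) be a sequence of subsets of ℝ converging in the Kuratowski sense to a closed set S∞, and let Λ > 0 with ±Λ ∉ S∞ and S∞ ∩ [-Λ,Λ] finite and nonempty. Then the sets S_n ∩ [-Λ,Λ] converge to S∞ ∩ [-Λ,Λ] in the Hausdorff distance: for every ε > 0 there is N such that for all n ≥ N, every point of S_n ∩ [-Λ,Λ] is within ε of S∞ ∩ [-Λ,Λ] and every point of S∞ ∩ [-Λ,Λ] is within ε of S_n ∩ [-Λ,Λ]. -/
import Mathlib


/-- If subsets `S_n ⊆ ℝ` converge in the Kuratowski sense to a closed set `S∞`, `±Λ ∉ S∞`, and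
`S∞ ∩ [-Λ,Λ]` is finite and nonempty, then `S_n ∩ [-Λ,Λ]` converges to `S∞ ∩ [-Λ,Λ]` in the
Hausdorff distance. -/
theorem stmt14 (S : ℕ → Set ℝ) (Sinf : Set ℝ)
    (hclosed : IsClosed Sinf)
    (hkur1 : ∀ s ∈ Sinf, ∃ u : ℕ → ℝ,
      (∀ n, u n ∈ S n) ∧ Filter.Tendsto u Filter.atTop (nhds s))
    (hkur2 : ∀ f : ℕ → ℕ, StrictMono f → ∀ u : ℕ → ℝ, (∀ n, u n ∈ S (f n)) →
      ∀ s : ℝ, Filter.Tendsto u Filter.atTop (nhds s) → s ∈ Sinf)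
    (Λ : ℝ) (hΛ : 0 < Λ) (hΛ1 : Λ ∉ Sinf) (hΛ2 : -Λ ∉ Sinf)
    (hfin : (Sinf ∩ Set.Icc (-Λ) Λ).Finite)
    (hne : (Sinf ∩ Set.Icc (-Λ) Λ).Nonempty) :
    ∀ ε > 0, ∃ N : ℕ, ∀ n ≥ N,
      (∀ x ∈ S n ∩ Set.Icc (-Λ) Λ, ∃ y ∈ Sinf ∩ Set.Icc (-Λ) Λ, |x - y| ≤ ε) ∧
      (∀ y ∈ Sinf ∩ Set.Icc (-Λ) Λ, ∃ x ∈ S n ∩ Set.Icc (-Λ) Λ, |x - y| ≤ ε) := by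
  intro ε hε
  have h2 : ∀ᶠ n in Filter.atTop, ∀ y ∈ Sinf ∩ Set.Icc (-Λ) Λ,
      ∃ x ∈ S n ∩ Set.Icc (-Λ) Λ, |x - y| ≤ ε := by
    rw [Filter.eventually_all_finite hfin]
    intro y hy
    obtain ⟨u, hu, hlim⟩ := hkur1 y hy.1
    have hyo : y ∈ Set.Ioo (-Λ) Λ := by
      obtain ⟨hy1, hy2, hy3⟩ := hy
      refine ⟨lt_of_le_of_ne hy2 ?_, lt_of_le_of_ne hy3 ?_⟩
      · rintro rfl; exact hΛ2 hy1
      · rintro rfl; exact hΛ1 hy1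
    have ha : ∀ᶠ n in Filter.atTop, u n ∈ Set.Ioo (-Λ) Λ :=
      hlim (isOpen_Ioo.mem_nhds hyo)
    have hb : ∀ᶠ n in Filter.atTop, |u n - y| ≤ ε := by
      have := Metric.tendsto_atTop.1 hlim ε hε
      obtain ⟨N, hN⟩ := this
      exact Filter.eventually_atTop.2 ⟨N, fun n hn => le_of_lt (by
        simpa [Real.dist_eq] using hN n hn)⟩
    filter_upwards [ha, hb] with n hn1 hn2
    exact ⟨u n, ⟨hu n, Set.Ioo_subset_Icc_self hn1⟩, hn2⟩
  have h1 : ∀ᶠ n in Filter.atTop, ∀ x ∈ S n ∩ Set.Icc (-Λ) Λ,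
      ∃ y ∈ Sinf ∩ Set.Icc (-Λ) Λ, |x - y| ≤ ε := by
    by_contra hc
    rw [Filter.not_eventually] at hc
    obtain ⟨φ, hφ, hP⟩ := Filter.extraction_of_frequently_atTop hc
    have hP' : ∀ n, ∃ x, (x ∈ S (φ n) ∧ x ∈ Set.Icc (-Λ) Λ) ∧
        ∀ y ∈ Sinf ∩ Set.Icc (-Λ) Λ, ε < |x - y| := by
      intro n
      have := hP n
      push_neg at this
      obtain ⟨x, hx, hfar⟩ := this
      exact ⟨x, ⟨hx.1, hx.2⟩, hfar⟩
    choose x hx hfar using hP'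
    obtain ⟨s, hsI, ψ, hψ, hlim⟩ := isCompact_Icc.tendsto_subseq (fun n => (hx n).2)
    have hsS : s ∈ Sinf :=
      hkur2 (φ ∘ ψ) (hφ.comp hψ) (x ∘ ψ) (fun n => (hx (ψ n)).1) s hlim
    have : ∀ᶠ n in Filter.atTop, |x (ψ n) - s| < ε := by
      obtain ⟨N, hN⟩ := Metric.tendsto_atTop.1 hlim ε hε
      exact Filter.eventually_atTop.2 ⟨N, fun n hn => by
        simpa [Real.dist_eq] using hN n hn⟩
    obtain ⟨n, hn⟩ := this.exists
    exact absurd hn (not_lt.2 (le_of_lt (hfar (ψ n) s ⟨hsS, hsI⟩)))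
  obtain ⟨N, hN⟩ := Filter.eventually_atTop.1 (h1.and h2)
  exact ⟨N, fun n hn => hN n hn⟩
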